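/- The map sending a Schnyder wood string $s$ of length $3n$ to a two-dimensional walk, obtained by moving the leading character (always a 'g') to the end, replacing each 'b' by an increment $(1,-1)$ and each maximal block of $k \ge 0$ 'r's followed by a 'g' by an increment $(-k,1)$, is a bijection between Schnyder wood strings of length $3n$ and walks of length $2n$ with increments in $\{(-k,1) : k \ge 0\} \cup \{(1,-1)\}$ that start and end at the origin and stay in $\{(x,y) \in \mathbb{Z}^2 : x \ge 0, y \ge -1\}$. -/

import Mathlib

/-- The characters of a Schnyder wood string. -/
inductive SChar : Type
  | g : SChar
  | b : SChar
  | r : SChar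
deriving DecidableEq

/-- Convert a (rotated) Schnyder wood string into a list of walk increments: each `b`
becomes `(1,-1)` and each maximal block of `k` `r`'s followed by a `g` becomes `(-k, 1)`.
The second argument accumulates the number of pending `r`'s. -/
def toSteps : List SChar → ℕ → List (ℤ × ℤ)
  | [], _ => []
  | SChar.b :: rest, _ => (1, -1) :: toSteps rest 0
  | SChar.r :: rest, k => toSteps rest (k + 1)
  | SChar.g :: rest, k => (-(k : ℤ), 1) :: toSteps rest 0

/-- The walk associated to a Schnyder wood string `s`: move the leading character to the
end, convert to increments, and take partial sums starting at the origin. -/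
def walkOf (s : List SChar) : List (ℤ × ℤ) :=
  List.scanl (fun p q => p + q) ((0 : ℤ), (0 : ℤ)) (toSteps (s.rotate 1) 0)

/-- A Schnyder wood string of length `3n`: `n` copies of each of `g`, `b`, `r`; every
prefix has at least as many `g`s as `b`s and at least as many `b`s as `r`s; no `r` is
immediately followed by a `b`. -/
def IsSchnyderString (n : ℕ) (s : List SChar) : Prop :=
  s.length = 3 * n ∧ s.count SChar.g = n ∧ s.count SChar.b = n ∧ s.count SChar.r = n ∧
  (∀ m : ℕ, (s.take m).count SChar.b ≤ (s.take m).count SChar.g ∧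
    (s.take m).count SChar.r ≤ (s.take m).count SChar.b) ∧
  ∀ i : ℕ, ¬(s[i]? = some SChar.r ∧ s[i+1]? = some SChar.b)

/-- A walk of length `2n` (a list of `2n+1` points of `ℤ²`) with increments in
`{(-k,1) : k ≥ 0} ∪ {(1,-1)}`, starting and ending at the origin, and staying in
`{(x,y) : x ≥ 0, y ≥ -1}`. -/
def IsGoodWalk (n : ℕ) (w : List (ℤ × ℤ)) : Prop :=
  w.length = 2 * n + 1 ∧ w[0]? = some (0, 0) ∧ w[2 * n]? = some (0, 0) ∧
  (∀ (i : ℕ) (p q : ℤ × ℤ), w[i]? = some p → w[i+1]? = some q →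
    q - p = (1, -1) ∨ ∃ k : ℕ, q - p = (-(k : ℤ), 1)) ∧
  ∀ p ∈ w, 0 ≤ p.1 ∧ -1 ≤ p.2

/-! Rotate `s = g u` to `t = u g`. Having no factor `rb` and ending in `g`, `t` factors uniquely
into letters `b` and blocks `rᵏg`, and `toSteps` reads these pieces as the steps `(1, -1)` and
`(-k, 1)` of the walk. The vertices of the walk are the values of `(#b - #r, #g - #b)` on the
prefixes of `t` that end between two pieces, and the ballot conditions on the prefixes of `s` say
exactly that this point lies in `{x ≥ 0, y ≥ -1}` for every prefix of `t`. Both conditions agree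
because inside a block the first coordinate only decreases while the second stays put. -/

open List

namespace List

section AddGroup

variable {α : Type*} [AddGroup α]

theorem partialSums_injective : Function.Injective (partialSums : List α → List α) := by
  intro d₁ d₂ h
  induction d₁ generalizing d₂ with
  | nil => cases d₂ <;> simp_all [partialSums_cons]
  | cons x d₁ ih =>
    cases d₂ with
    | nil => simp [partialSums_cons] at h
    | cons y d₂ =>
      simp only [partialSums_cons, cons.injEq, true_and] at h
      have hxy : x = y := by simpa [partialSums] using congrArg head? h
      subst hxy
      rw [ih ((map_injective_iff.2 (add_right_injective x)) h)]

theorem exists_scanl_add_eq_cons (a : α) (v : List α) :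
    ∃ d : List α, d.scanl (· + ·) a = a :: v := by
  induction v generalizing a with
  | nil => exact ⟨[], rfl⟩
  | cons b v ih =>
    obtain ⟨d, hd⟩ := ih b
    exact ⟨(-a + b) :: d, by simp [hd]⟩

theorem forall_mem_partialSums_iff {P : α → Prop} {d : List α} :
    (∀ p ∈ d.partialSums, P p) ↔ ∀ i, P (d.take i).sum := by
  simp only [mem_iff_getElem?, getElem?_partialSums]
  constructor
  · intro h i
    rcases le_or_gt i d.length with hi | hi
    · exact h _ ⟨i, by simp [hi]⟩
    · rw [take_of_length_le hi.le, ← take_length (l := d)]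
      exact h _ ⟨d.length, by simp⟩
  · rintro h p ⟨i, hi⟩
    split_ifs at hi
    exact Option.some.inj hi ▸ h i

end AddGroup

theorem forall_consecutive_partialSums_iff {α : Type*} [AddCommGroup α] {P : α → Prop}
    {d : List α} :
    (∀ (i : ℕ) (p q : α), d.partialSums[i]? = some p → d.partialSums[i + 1]? = some q →
      P (q - p)) ↔ ∀ x ∈ d, P x := by
  simp only [getElem?_partialSums]
  constructor
  · intro h x hx
    obtain ⟨i, hi, rfl⟩ := getElem_of_mem hx
    have := h i (d.take i).sum ((d.take i).sum + d[i]) (by simp [hi.le])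
      (by simp [hi, sum_take_succ _ _ hi])
    rwa [add_sub_cancel_left] at this
  · intro h i p q hp hq
    split_ifs at hp hq with _ hi₂
    have hi : i < d.length := hi₂
    rw [← Option.some.inj hp, ← Option.some.inj hq, sum_take_succ _ _ hi, add_sub_cancel_left]
    exact h _ (getElem_mem hi)

end List

def IsStep (x : ℤ × ℤ) : Prop := x = (1, -1) ∨ ∃ k : ℕ, x = (-(k : ℤ), 1)

def InRegion (p : ℤ × ℤ) : Prop := 0 ≤ p.1 ∧ -1 ≤ p.2

theorem isGoodWalk_partialSums_iff {n : ℕ} {d : List (ℤ × ℤ)} :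
    IsGoodWalk n d.partialSums ↔ d.length = 2 * n ∧ d.sum = 0 ∧ (∀ x ∈ d, IsStep x) ∧
      ∀ i, InRegion (d.take i).sum := by
  have last_eq_sum (hlen : d.length = 2 * n) : d.partialSums[2 * n]? = some d.sum := by
    rw [getElem?_partialSums, if_pos hlen.ge, ← hlen, take_length]
  rw [IsGoodWalk, length_partialSums, add_left_inj]
  constructor
  · rintro ⟨hlen, -, hend, hsteps, hregion⟩
    rw [last_eq_sum hlen, Option.some_inj] at hend
    exact ⟨hlen, hend, forall_consecutive_partialSums_iff.1 hsteps,
      forall_mem_partialSums_iff.1 hregion⟩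
  · rintro ⟨hlen, hsum, hsteps, hregion⟩
    exact ⟨hlen, by simp [Prod.mk_zero_zero], by rw [last_eq_sum hlen, hsum]; rfl,
      forall_consecutive_partialSums_iff.2 hsteps, forall_mem_partialSums_iff.2 hregion⟩

/-- The point reached by reading `l` with `g ↦ (0, 1)`, `b ↦ (1, -1)` and `r ↦ (-1, 0)`. -/
def displacement (l : List SChar) : ℤ × ℤ :=
  ((l.count .b : ℤ) - l.count .r, (l.count .g : ℤ) - l.count .b)

@[simp]
theorem displacement_nil : displacement [] = 0 := rfl

@[simp]
theorem displacement_append (l₁ l₂ : List SChar) :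
    displacement (l₁ ++ l₂) = displacement l₁ + displacement l₂ := by
  simp only [displacement, count_append, Nat.cast_add, Prod.mk_add_mk, Prod.mk.injEq]
  constructor <;> ring

@[simp]
theorem displacement_cons_g (l : List SChar) : displacement (.g :: l) = (0, 1) + displacement l :=
  displacement_append [.g] l

@[simp]
theorem displacement_cons_b (l : List SChar) : displacement (.b :: l) = (1, -1) + displacement l :=
  displacement_append [.b] l

@[simp] theorem displacement_replicate_r (k : ℕ) :
    displacement (replicate k .r) = (-(k : ℤ), 0) := by
  simp [displacement, count_replicate]

inductive BlockWord : List SChar → Prop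
  | nil : BlockWord []
  | b_cons {t : List SChar} : BlockWord t → BlockWord (.b :: t)
  | block (k : ℕ) {t : List SChar} : BlockWord t → BlockWord (replicate k .r ++ .g :: t)

def fromSteps : List (ℤ × ℤ) → List SChar
  | [] => []
  | x :: d => if x = (1, -1) then .b :: fromSteps d
      else replicate (-x.1).toNat .r ++ .g :: fromSteps d

theorem toSteps_replicate_r_append (k : ℕ) (l : List SChar) (m : ℕ) :
    toSteps (replicate k .r ++ l) m = toSteps l (m + k) := by
  induction k generalizing m with
  | zero => rfl
  | succ k ih => rw [replicate_succ, cons_append, toSteps, ih, Nat.add_right_comm]; rfl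

theorem toSteps_block (k : ℕ) (t : List SChar) :
    toSteps (replicate k .r ++ .g :: t) 0 = (-(k : ℤ), 1) :: toSteps t 0 := by
  rw [toSteps_replicate_r_append, zero_add, toSteps]

theorem length_toSteps (t : List SChar) (m : ℕ) :
    (toSteps t m).length = t.count .g + t.count .b := by
  induction t generalizing m with
  | nil => rfl
  | cons c t ih => cases c <;> simp [toSteps, ih] <;> omega

theorem isStep_of_mem_toSteps {t : List SChar} {m : ℕ} {x : ℤ × ℤ} (hx : x ∈ toSteps t m) :
    IsStep x := by
  induction t generalizing m with
  | nil => simp [toSteps] at hx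
  | cons c t ih =>
    cases c <;> simp only [toSteps, mem_cons] at hx
    · exact hx.elim (fun h => .inr ⟨m, h⟩) ih
    · exact hx.elim .inl ih
    · exact ih hx

theorem fromSteps_toSteps {t : List SChar} (ht : BlockWord t) : fromSteps (toSteps t 0) = t := by
  induction ht with
  | nil => rfl
  | b_cons _ ih => simp [toSteps, fromSteps, ih]
  | block k _ ih => simp [toSteps_block, fromSteps, ih]

theorem toSteps_fromSteps {d : List (ℤ × ℤ)} (hd : ∀ x ∈ d, IsStep x) :
    toSteps (fromSteps d) 0 = d := by
  induction d with
  | nil => rfl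
  | cons x d ih =>
    rw [forall_mem_cons] at hd
    obtain ⟨rfl | ⟨k, rfl⟩, hd⟩ := hd
    · simp [fromSteps, toSteps, ih hd]
    · simp [fromSteps, toSteps_block, ih hd]

theorem blockWord_fromSteps (d : List (ℤ × ℤ)) : BlockWord (fromSteps d) := by
  induction d with
  | nil => exact .nil
  | cons x d ih =>
    rw [fromSteps]
    split
    · exact ih.b_cons
    · exact .block _ ih

theorem sum_toSteps {t : List SChar} (ht : BlockWord t) : (toSteps t 0).sum = displacement t := by
  induction ht with
  | nil => rfl
  | b_cons _ ih => simp [toSteps, ih]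
  | block k _ ih => simp [toSteps_block, ih, ← add_assoc]

theorem take_block_of_le {k j : ℕ} (t : List SChar) (hj : j ≤ k) :
    (replicate k SChar.r ++ .g :: t).take j = replicate j .r := by
  simp [take_append, take_replicate, hj, Nat.sub_eq_zero_of_le hj]

theorem take_block_add (k j : ℕ) (t : List SChar) :
    (replicate k SChar.r ++ .g :: t).take (k + 1 + j) = replicate k .r ++ .g :: t.take j := by
  simp [take_append, take_replicate, Nat.add_assoc, Nat.add_comm 1 j]

theorem exists_sum_take_toSteps_eq {t : List SChar} (ht : BlockWord t) (i : ℕ) :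
    ∃ j, ((toSteps t 0).take i).sum = displacement (t.take j) := by
  induction ht generalizing i with
  | nil => exact ⟨0, by simp [toSteps]⟩
  | b_cons _ ih =>
    cases i with
    | zero => exact ⟨0, by simp⟩
    | succ i =>
      obtain ⟨j, hj⟩ := ih i
      exact ⟨j + 1, by simp [toSteps, hj]⟩
  | block k _ ih =>
    cases i with
    | zero => exact ⟨0, by simp⟩
    | succ i =>
      obtain ⟨j, hj⟩ := ih i
      exact ⟨k + 1 + j, by simp [toSteps_block, take_block_add, hj, ← add_assoc]⟩

theorem exists_sum_take_toSteps_le {t : List SChar} (ht : BlockWord t) (j : ℕ) :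
    (∃ i, ((toSteps t 0).take i).sum.1 ≤ (displacement (t.take j)).1) ∧
      ∃ i, ((toSteps t 0).take i).sum.2 = (displacement (t.take j)).2 := by
  induction ht generalizing j with
  | nil => exact ⟨⟨0, by simp⟩, ⟨0, by simp⟩⟩
  | b_cons _ ih =>
    cases j with
    | zero => exact ⟨⟨0, by simp⟩, ⟨0, by simp⟩⟩
    | succ j =>
      obtain ⟨⟨i₁, hi₁⟩, ⟨i₂, hi₂⟩⟩ := ih j
      exact ⟨⟨i₁ + 1, by simpa [toSteps] using hi₁⟩,
        ⟨i₂ + 1, by simpa [toSteps] using hi₂⟩⟩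
  | @block k t _ ih =>
    rcases le_or_gt j k with hj | hj
    · refine ⟨⟨1, ?_⟩, ⟨0, ?_⟩⟩ <;> simp [toSteps_block, take_block_of_le t hj, hj]
    · obtain ⟨j, rfl⟩ : ∃ j', j = k + 1 + j' := ⟨j - (k + 1), by omega⟩
      obtain ⟨⟨i₁, hi₁⟩, ⟨i₂, hi₂⟩⟩ := ih j
      refine ⟨⟨i₁ + 1, ?_⟩, ⟨i₂ + 1, ?_⟩⟩ <;> simpa [toSteps_block, take_block_add]

theorem forall_inRegion_sum_take_toSteps_iff {t : List SChar} (ht : BlockWord t) :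
    (∀ i, InRegion ((toSteps t 0).take i).sum) ↔ ∀ j, InRegion (displacement (t.take j)) := by
  constructor
  · intro h j
    obtain ⟨⟨i₁, hi₁⟩, ⟨i₂, hi₂⟩⟩ := exists_sum_take_toSteps_le ht j
    exact ⟨(h i₁).1.trans hi₁, hi₂ ▸ (h i₂).2⟩
  · intro h i
    obtain ⟨j, hj⟩ := exists_sum_take_toSteps_eq ht i
    exact hj ▸ h j

def NotRB (x y : SChar) : Prop := ¬(x = .r ∧ y = .b)

theorem isChain_notRB_iff (l : List SChar) :
    l.IsChain NotRB ↔ ∀ i : ℕ, ¬(l[i]? = some .r ∧ l[i + 1]? = some .b) := by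
  rw [isChain_iff_getElem]
  constructor
  · rintro h i ⟨hr, hb⟩
    obtain ⟨hi, hb⟩ := List.getElem?_eq_some_iff.1 hb
    exact h i hi ⟨by simpa [getElem?_eq_getElem (Nat.lt_of_succ_lt hi)] using hr, hb⟩
  · rintro h i hi ⟨hr, hb⟩
    exact h i ⟨by rw [getElem?_eq_getElem (by omega), hr], by simp [hi, hb]⟩

theorem blockWord_iff (t : List SChar) :
    BlockWord t ↔ t.IsChain NotRB ∧ t.getLast? ≠ some .r := by
  constructor
  · intro ht
    induction ht with
    | nil => simp
    | @b_cons t _ ih =>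
      cases h : t.getLast? <;> simp_all [isChain_cons, NotRB, getLast?_cons]
    | @block k t _ ih =>
      have hr : (replicate k SChar.r).IsChain NotRB := isChain_replicate_of_rel k (by simp [NotRB])
      cases h : t.getLast? <;>
        simp_all [isChain_append, isChain_cons, NotRB, getLast?_cons, getLast?_append]
  · induction t with
    | nil => exact fun _ => .nil
    | cons c t ih =>
      rintro ⟨hchain, hlast⟩
      rw [isChain_cons] at hchain
      have ht : BlockWord t := ih ⟨hchain.2, by cases t <;> simp_all [getLast?_cons_cons]⟩
      cases c with
      | g => exact .block 0 ht
      | b => exact ht.b_cons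
      | r =>
        cases ht with
        | nil => simp at hlast
        | b_cons => simp [NotRB] at hchain
        | block k ht' => exact .block (k + 1) ht'

theorem displacement_eq_zero_iff (l : List SChar) :
    displacement l = 0 ↔ l.count .b = l.count .r ∧ l.count .g = l.count .b := by
  simp [displacement, Prod.ext_iff, sub_eq_zero]

def IsRotatedSchnyder (n : ℕ) (t : List SChar) : Prop :=
  BlockWord t ∧ t.count .g = n ∧ t.count .b = n ∧ t.count .r = n ∧
    ∀ j, InRegion (displacement (t.take j))

theorem isGoodWalk_partialSums_toSteps_iff {n : ℕ} {t : List SChar} (ht : BlockWord t) :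
    IsGoodWalk n (toSteps t 0).partialSums ↔ IsRotatedSchnyder n t := by
  rw [isGoodWalk_partialSums_iff, length_toSteps, sum_toSteps ht, displacement_eq_zero_iff,
    forall_inRegion_sum_take_toSteps_iff ht]
  constructor
  · rintro ⟨hlen, ⟨hbr, hgb⟩, -, hregion⟩
    exact ⟨ht, by omega, by omega, by omega, hregion⟩
  · rintro ⟨-, hg, hb, hr, hregion⟩
    exact ⟨by omega, ⟨by omega, by omega⟩, fun _ => isStep_of_mem_toSteps, hregion⟩

theorem length_eq_count_add (l : List SChar) :
    l.length = l.count .g + l.count .b + l.count .r := by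
  induction l with
  | nil => rfl
  | cons c l ih => cases c <;> simp [ih] <;> omega

theorem head_eq_g_of_isSchnyderString {n : ℕ} {c : SChar} {u : List SChar}
    (h : IsSchnyderString n (c :: u)) : c = .g := by
  have := h.2.2.2.2.1 1
  cases c <;> simp_all

theorem IsRotatedSchnyder.last_eq_g {n : ℕ} {u : List SChar} {c : SChar}
    (h : IsRotatedSchnyder n (u ++ [c])) : c = SChar.g := by
  obtain ⟨hblock, hg, hb, hr, hregion⟩ := h
  have hu := hregion u.length
  rw [take_left' rfl] at hu
  cases c with
  | g => rfl
  | b =>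
    -- the prefix `u` would sit at `(-1, 1)`
    have htotal : displacement (u ++ [.b]) = 0 :=
      (displacement_eq_zero_iff _).2 ⟨hb.trans hr.symm, hg.trans hb.symm⟩
    rw [displacement_append, displacement_cons_b, displacement_nil, add_zero] at htotal
    have := congrArg Prod.fst htotal
    simp only [Prod.fst_add, Prod.fst_zero] at this
    exact absurd hu.1 (by omega)
  | r => simp [blockWord_iff] at hblock

theorem forall_inRegion_take_g_cons_iff (u : List SChar) :
    (∀ m, ((SChar.g :: u).take m).count .b ≤ ((SChar.g :: u).take m).count .g ∧
        ((SChar.g :: u).take m).count .r ≤ ((SChar.g :: u).take m).count .b) ↔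
      ∀ j, InRegion (displacement (u.take j)) := by
  constructor
  · intro h j
    have := h (j + 1)
    simp only [take_succ_cons, ne_eq, reduceCtorEq, not_false_eq_true, count_cons_of_ne,
      count_cons_self] at this
    simp only [InRegion, displacement]
    omega
  · intro h m
    cases m with
    | zero => simp
    | succ m =>
      have := h m
      simp only [InRegion, displacement] at this
      simp only [take_succ_cons, ne_eq, reduceCtorEq, not_false_eq_true, count_cons_of_ne,
        count_cons_self]
      omega

theorem forall_inRegion_take_append_g_iff (u : List SChar) :
    (∀ j, InRegion (displacement ((u ++ [SChar.g]).take j))) ↔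
      ∀ j, InRegion (displacement (u.take j)) := by
  constructor
  · intro h j
    rcases le_or_gt j u.length with hj | hj
    · simpa [take_append_of_le_length hj] using h j
    · simpa [take_of_length_le hj.le, take_left' rfl] using h u.length
  · intro h j
    rcases le_or_gt j u.length with hj | hj
    · simpa [take_append_of_le_length hj] using h j
    · have hu := h u.length
      rw [take_length] at hu
      rw [take_of_length_le (by simp; omega), displacement_append]
      simp only [InRegion, displacement_cons_g, displacement_nil, add_zero, Prod.fst_add,
        Prod.snd_add] at hu ⊢
      omega

theorem isChain_notRB_g_cons_iff (u : List SChar) :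
    (SChar.g :: u).IsChain NotRB ↔ u.IsChain NotRB := by
  simp [isChain_cons, NotRB]

theorem isChain_notRB_append_g_iff (u : List SChar) :
    (u ++ [SChar.g]).IsChain NotRB ↔ u.IsChain NotRB := by
  simp [isChain_append, NotRB]

theorem isSchnyderString_g_cons_iff {n : ℕ} {u : List SChar} :
    IsSchnyderString n (SChar.g :: u) ↔ IsRotatedSchnyder n (u ++ [SChar.g]) := by
  have hperm := perm_append_singleton SChar.g u
  rw [IsSchnyderString, IsRotatedSchnyder, ← hperm.length_eq, ← hperm.count_eq,
    ← hperm.count_eq, ← hperm.count_eq, length_eq_count_add, ← isChain_notRB_iff,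
    isChain_notRB_g_cons_iff, blockWord_iff, isChain_notRB_append_g_iff,
    forall_inRegion_take_g_cons_iff, forall_inRegion_take_append_g_iff]
  simp only [getLast?_concat, ne_eq, Option.some.injEq, reduceCtorEq, not_false_eq_true, and_true]
  constructor
  · rintro ⟨-, hg, hb, hr, hregion, hchain⟩
    exact ⟨hchain, hg, hb, hr, hregion⟩
  · rintro ⟨hchain, hg, hb, hr, hregion⟩
    exact ⟨by omega, hg, hb, hr, hregion, hchain⟩

theorem isSchnyderString_iff_isRotatedSchnyder_rotate {n : ℕ} {s : List SChar} :
    IsSchnyderString n s ↔ IsRotatedSchnyder n (s.rotate 1) := by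
  cases s with
  | nil =>
    constructor
    · rintro ⟨hlen, -⟩
      obtain rfl : n = 0 := by simpa using hlen
      exact ⟨.nil, rfl, rfl, rfl, fun _ => by simp [InRegion]⟩
    · rintro ⟨-, rfl, -⟩
      exact ⟨rfl, rfl, rfl, rfl, by simp, by simp⟩
  | cons c u =>
    rw [rotate_cons_succ, rotate_zero]
    obtain rfl | hc := eq_or_ne c SChar.g
    · exact isSchnyderString_g_cons_iff
    · exact iff_of_false (fun h => hc (head_eq_g_of_isSchnyderString h))
        (fun h => hc h.last_eq_g)

theorem walkOf_eq_partialSums (s : List SChar) : walkOf s = (toSteps (s.rotate 1) 0).partialSums :=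
  rfl

theorem IsGoodWalk.exists_partialSums_eq {n : ℕ} {w : List (ℤ × ℤ)} (hw : IsGoodWalk n w) :
    ∃ d : List (ℤ × ℤ), d.partialSums = w := by
  obtain ⟨v, rfl⟩ : ∃ v, w = (0, 0) :: v := by
    cases w with
    | nil => simp [IsGoodWalk] at hw
    | cons a v => exact ⟨v, by simpa [IsGoodWalk] using hw.2.1⟩
  exact exists_scanl_add_eq_cons 0 v

/-- The map `s ↦ walkOf s` is a bijection between Schnyder wood strings of length `3n`
and walks of length `2n` with increments in `{(-k,1) : k ≥ 0} ∪ {(1,-1)}` that start and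
end at the origin and stay in `{x ≥ 0, y ≥ -1}`. -/
theorem schnyder_string_walk_bijection (n : ℕ) :
    Set.BijOn walkOf {s | IsSchnyderString n s} {w | IsGoodWalk n w} := by
  have blockWord_rotate {s : List SChar} (hs : IsSchnyderString n s) : BlockWord (s.rotate 1) :=
    (isSchnyderString_iff_isRotatedSchnyder_rotate.1 hs).1
  refine ⟨fun s hs => ?_, fun s₁ hs₁ s₂ hs₂ h => ?_, fun w hw => ?_⟩
  · exact (isGoodWalk_partialSums_toSteps_iff (blockWord_rotate hs)).2
      (isSchnyderString_iff_isRotatedSchnyder_rotate.1 hs)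
  · have hsteps : toSteps (s₁.rotate 1) 0 = toSteps (s₂.rotate 1) 0 := partialSums_injective h
    rw [← rotate_eq_rotate, ← fromSteps_toSteps (blockWord_rotate hs₁),
      ← fromSteps_toSteps (blockWord_rotate hs₂), hsteps]
  · obtain ⟨d, rfl⟩ := hw.exists_partialSums_eq
    have hd : toSteps (fromSteps d) 0 = d :=
      toSteps_fromSteps (isGoodWalk_partialSums_iff.1 hw).2.2.1
    obtain ⟨s, hs⟩ : ∃ s : List SChar, s.rotate 1 = fromSteps d :=
      ⟨_, rotate_eq_iff.2 rfl⟩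
    refine ⟨s, isSchnyderString_iff_isRotatedSchnyder_rotate.2 ?_, ?_⟩
    · rw [hs, ← isGoodWalk_partialSums_toSteps_iff (blockWord_fromSteps d), hd]
      exact hw
    · rw [walkOf_eq_partialSums, hs, hd]
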